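/- Let G be a finite group and H a subgroup. Then H is nilpotent and subnormal in G if and only if the normal closure of H in G is nilpotent. -/

import Mathlib

/-!
In a finite group the join of two normal nilpotent subgroups is nilpotent (Fitting): the Sylow
`p`-subgroups of the factors are characteristic in them, hence normal in the group, and their join
is a normal `p`-subgroup of index prime to `p` in the product. So there is a largest normal
nilpotent subgroup `F(G)`, and it is characteristic. A nilpotent subnormal `H ≠ G` lies in a proper
normal subgroup `K`; by induction on `|G|` it lies in `F(K)`, which is normal in `G` and nilpotent,
so `H ≤ F(G)` and the normal closure of `H`, contained in `F(G)`, is nilpotent.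

Conversely every subgroup `H` of a nilpotent group is subnormal, through the chain of joins
`H ⊔ Z i` with the upper central series; so `H ≤ ⟨H^G⟩ ⊴ G` makes `H` subnormal.
-/

/-- `A` is a normal subgroup of `B` (for subgroups of an ambient group `G`). -/
def NormalIn {G : Type*} [Group G] (A B : Subgroup G) : Prop :=
  A ≤ B ∧ ∀ b ∈ B, ∀ a ∈ A, b * a * b⁻¹ ∈ A

/-- `H` is subnormal in `G`: there is a chain `H = H₀ ⊴ H₁ ⊴ ⋯ ⊴ Hₙ = G`. -/
def Subnormal {G : Type*} [Group G] (H : Subgroup G) : Prop :=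
  ∃ (n : ℕ) (c : ℕ → Subgroup G), c 0 = H ∧ c n = ⊤ ∧
    ∀ i < n, NormalIn (c i) (c (i + 1))

open Subgroup Group

section Chains

variable {G : Type*} [Group G]

theorem normalIn_iff {A B : Subgroup G} : NormalIn A B ↔ A ≤ B ∧ (A.subgroupOf B).Normal := by
  refine ⟨fun ⟨hAB, hconj⟩ => ⟨hAB, ?_⟩, fun ⟨hAB, hN⟩ => ⟨hAB, ?_⟩⟩
  · exact (normal_subgroupOf_iff hAB).mpr fun a b ha hb => hconj b hb a ha
  · exact fun b hb a ha => (normal_subgroupOf_iff hAB).mp hN a b ha hb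

theorem subnormal_iff_isSubnormal {H : Subgroup G} : Subnormal H ↔ H.IsSubnormal := by
  constructor
  · rintro ⟨n, c, rfl, hn, hc⟩
    induction n generalizing c with
    | zero => exact hn ▸ IsSubnormal.top
    | succ n ih =>
      obtain ⟨hle, hN⟩ := normalIn_iff.mp (hc 0 n.succ_pos)
      exact .step _ _ hle (ih (fun i => c (i + 1)) hn fun i hi => hc (i + 1) (by omega)) hN
  · intro h
    induction h with
    | top => exact ⟨0, fun _ => ⊤, rfl, rfl, fun _ h => absurd h (Nat.not_lt_zero _)⟩
    | step H K hle _ hN ih =>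
      obtain ⟨n, c, hc0, hcn, hc⟩ := ih
      refine ⟨n + 1, fun | 0 => H | i + 1 => c i, rfl, hcn, ?_⟩
      rintro (_ | i) hi
      · subst hc0
        exact normalIn_iff.mpr ⟨hle, hN⟩
      · exact hc i (by omega)

end Chains

namespace Subgroup

variable {G : Type*} [Group G]

theorem isNilpotent_of_le {K L : Subgroup G} (h : K ≤ L) [IsNilpotent L] : IsNilpotent K :=
  (isNilpotent_congr (subgroupOfEquivOfLe h)).mp inferInstance

theorem upperCentralSeries_succ_le_normalizer_sup (H : Subgroup G) (n : ℕ) :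
    upperCentralSeries G (n + 1) ≤
      normalizer ((H ⊔ upperCentralSeries G n : Subgroup G) : Set G) := by
  intro z hz
  rw [mem_normalizer_iff]
  intro x
  have hcomm : z * x * z⁻¹ * x⁻¹ ∈ H ⊔ upperCentralSeries G n :=
    le_sup_right (a := H) (mem_upperCentralSeries_succ_iff.mp hz x)
  rw [show z * x * z⁻¹ = z * x * z⁻¹ * x⁻¹ * x by group, mul_mem_cancel_left hcomm]

theorem isSubnormal_of_isNilpotent [IsNilpotent G] (H : Subgroup G) : H.IsSubnormal := by
  obtain ⟨n, hn⟩ := IsNilpotent.nilpotent G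
  have hstep : ∀ k, (H ⊔ upperCentralSeries G (k + 1)).IsSubnormal →
      (H ⊔ upperCentralSeries G k).IsSubnormal := fun k hk =>
    have hle := sup_le_sup_left (upperCentralSeries_mono G k.le_succ) H
    .step _ _ hle hk <| (normal_subgroupOf_iff_le_normalizer hle).mpr <|
      sup_le (le_sup_left.trans le_normalizer) (upperCentralSeries_succ_le_normalizer_sup H k)
  have hchain : (H ⊔ upperCentralSeries G 0).IsSubnormal :=
    Nat.decreasingInduction (motive := fun k _ => (H ⊔ upperCentralSeries G k).IsSubnormal)
      (fun k _ => hstep k) (by simp [hn]) n.zero_le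
  simpa using hchain

theorem relIndex_sup_dvd (A : Subgroup G) [A.Normal] (B C : Subgroup G) :
    (A ⊔ B).relIndex (A ⊔ C) ∣ B.relIndex C := by
  let π := QuotientGroup.mk' A
  have hcomap : comap π (map π B) = A ⊔ B := by
    rw [comap_map_eq, QuotientGroup.ker_mk', sup_comm]
  have : (A ⊔ B).relIndex (A ⊔ C) = (A ⊔ B).relIndex C := by
    rw [← hcomap, relIndex_comap, relIndex_comap, map_sup, QuotientGroup.map_mk'_self, bot_sup_eq]
  exact this ▸ relIndex_dvd_of_le_left C le_sup_right

theorem relIndex_sup_sup_dvd {A₁ A₂ B₁ B₂ : Subgroup G} [A₁.Normal] [B₂.Normal]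
    (h₁ : A₁ ≤ B₁) (h₂ : A₂ ≤ B₂) :
    (A₁ ⊔ A₂).relIndex (B₁ ⊔ B₂) ∣ A₁.relIndex B₁ * A₂.relIndex B₂ := by
  rw [← relIndex_mul_relIndex _ (A₁ ⊔ B₂) _ (sup_le_sup_left h₂ A₁) (sup_le_sup_right h₁ B₂),
    mul_comm]
  refine mul_dvd_mul ?_ (relIndex_sup_dvd A₁ A₂ B₂)
  simpa only [sup_comm B₂] using relIndex_sup_dvd B₂ A₁ B₁

theorem exists_normal_isPGroup_not_dvd_relIndex [Finite G] (M : Subgroup G) [M.Normal]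
    [IsNilpotent M] (p : ℕ) [Fact p.Prime] :
    ∃ O ≤ M, O.Normal ∧ IsPGroup p O ∧ ¬ p ∣ O.relIndex M := by
  let P : Sylow p M := default
  have : (P : Subgroup M).Characteristic := P.characteristic_of_normal inferInstance
  refine ⟨(P : Subgroup M).map M.subtype, map_subtype_le _, inferInstance, P.isPGroup'.map _, ?_⟩
  rw [relIndex, subgroupOf, comap_map_eq_self_of_injective M.subtype_injective]
  exact P.not_dvd_index

end Subgroup

theorem Group.isNilpotent_of_forall_exists_normal_isPGroup {G : Type*} [Group G] [Finite G]
    (h : ∀ p, p.Prime → ∃ O : Subgroup G, O.Normal ∧ IsPGroup p O ∧ ¬ p ∣ O.index) :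
    IsNilpotent G := by
  refine (isNilpotent_of_finite_tfae.out 0 3).mpr fun p hp P => ?_
  have := hp
  obtain ⟨O, hO, hOp, hidx⟩ := h p hp.out
  have hPO : (P : Subgroup G) = O :=
    (hOp.toSylow hidx).is_maximal' P.isPGroup' (hOp.le_sylow_of_normal P)
  exact hPO ▸ hO

theorem Subgroup.isNilpotent_sup {G : Type*} [Group G] [Finite G] (M N : Subgroup G) [M.Normal]
    [N.Normal] [IsNilpotent M] [IsNilpotent N] : IsNilpotent ↥(M ⊔ N) := by
  refine isNilpotent_of_forall_exists_normal_isPGroup fun p hp => ?_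
  have := Fact.mk hp
  obtain ⟨OM, hOM, _, hOMp, hOMidx⟩ := M.exists_normal_isPGroup_not_dvd_relIndex p
  obtain ⟨ON, hON, _, hONp, hONidx⟩ := N.exists_normal_isPGroup_not_dvd_relIndex p
  refine ⟨(OM ⊔ ON).subgroupOf (M ⊔ N), (sup_normal OM ON).subgroupOf _,
    (hOMp.to_sup_of_normal_right hONp).comap_subtype, fun hdvd => ?_⟩
  rcases (Nat.Prime.dvd_mul hp).mp (hdvd.trans (relIndex_sup_sup_dvd hOM hON)) with hM | hN
  exacts [hOMidx hM, hONidx hN]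

def fittingSubgroup (G : Type*) [Group G] : Subgroup G :=
  sSup {N | N.Normal ∧ IsNilpotent N}

section FittingSubgroup

variable {G : Type*} [Group G]

theorem le_fittingSubgroup {N : Subgroup G} (hN : N.Normal) (hnil : IsNilpotent N) :
    N ≤ fittingSubgroup G :=
  le_sSup ⟨hN, hnil⟩

variable [Finite G]

theorem fittingSubgroup_normal_and_isNilpotent :
    (fittingSubgroup G).Normal ∧ IsNilpotent (fittingSubgroup G) := by
  have : Finite (Subgroup G) := Finite.of_injective _ SetLike.coe_injective
  have hsup : SupClosed {N : Subgroup G | N.Normal ∧ IsNilpotent N} := by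
    rintro M ⟨hM, hMnil⟩ N ⟨hN, hNnil⟩
    exact ⟨sup_normal M N, isNilpotent_sup M N⟩
  exact hsup.sSup_mem (Set.toFinite _) ⟨normal_bot, inferInstance⟩ subset_rfl

instance fittingSubgroup_normal : (fittingSubgroup G).Normal :=
  fittingSubgroup_normal_and_isNilpotent.1

instance isNilpotent_fittingSubgroup : IsNilpotent (fittingSubgroup G) :=
  fittingSubgroup_normal_and_isNilpotent.2

instance fittingSubgroup_characteristic : (fittingSubgroup G).Characteristic :=
  characteristic_iff_map_le.mpr fun φ =>
    le_fittingSubgroup (fittingSubgroup_normal.map _ φ.surjective)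
      ((isNilpotent_congr (equivMapOfInjective _ _ φ.injective)).mp inferInstance)

theorem Subgroup.IsSubnormal.le_fittingSubgroup {H : Subgroup G} (hH : H.IsSubnormal)
    (hnil : IsNilpotent H) : H ≤ fittingSubgroup G := by
  induction hcard : Nat.card G using Nat.strong_induction_on generalizing G with
  | _ n ih =>
  obtain rfl | ⟨K, hK, hHK, hKtop⟩ := hH.lt_normal
  · exact _root_.le_fittingSubgroup normal_top hnil
  have hKcard : Nat.card K < n := by
    obtain ⟨x, -, hx⟩ := SetLike.exists_of_lt hKtop
    exact hcard ▸ Finite.card_subtype_lt hx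
  have hHK' : H.subgroupOf K ≤ fittingSubgroup K :=
    ih _ hKcard hH.subgroupOf ((isNilpotent_congr (subgroupOfEquivOfLe hHK)).mpr hnil) rfl
  calc H = (H.subgroupOf K).map K.subtype := (map_subgroupOf_eq_of_le hHK).symm
    _ ≤ (fittingSubgroup K).map K.subtype := map_mono hHK'
    _ ≤ fittingSubgroup G := _root_.le_fittingSubgroup inferInstance
      ((isNilpotent_congr (equivMapOfInjective _ _ K.subtype_injective)).mp inferInstance)

end FittingSubgroup

/-- For a finite group `G`, a subgroup `H` is nilpotent and subnormal in `G`
iff the normal closure of `H` in `G` is nilpotent. -/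
theorem stmt8 {G : Type*} [Group G] [Finite G] (H : Subgroup G) :
    (Group.IsNilpotent H ∧ Subnormal H) ↔
      Group.IsNilpotent (Subgroup.normalClosure (H : Set G)) := by
  rw [subnormal_iff_isSubnormal]
  constructor
  · rintro ⟨hnil, hsub⟩
    exact isNilpotent_of_le (normalClosure_le_normal (hsub.le_fittingSubgroup hnil))
  · intro hnil
    exact ⟨isNilpotent_of_le le_normalClosure,
      IsSubnormal.trans le_normalClosure (isSubnormal_of_isNilpotent _)
        normalClosure_normal.isSubnormal⟩
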